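/- Let K be a finite field of odd characteristic and let α ∈ K((T)) admit a continued fraction datum (αₙ, aₙ). Assume α is quadratic over the rational function field: there exist u, v, w ∈ K[X] with u ≠ 0 and ι u·α² + ι v·α + ι w = 0. Then the continued fraction of α is periodic: there exist n ≥ 0 and ℓ ≥ 1 with αₙ = αₙ₊ℓ. -/

import Mathlib

/-!
Every complete quotient `Aₙ` is a root of a quadratic `Uₙ x² + Vₙ x + Wₙ` over `K[X]`, obtained
from `u x² + v x + w` by the substitutions `x ↦ aₙ + 1 / x`, which preserve the discriminant `δ²`,
`δ = 2 u α + v`. As `α` is irrational, `δ` is not a polynomial, so `Uₙ ≠ 0` and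
`2 Uₙ Aₙ + Vₙ = ±δ`. Write `|y| = exp (-order y)`. The conjugate roots `βₙ` obey the same recursion
`βₙ₊₁ (βₙ - aₙ) = 1`, and `|Aₙ - βₙ| = |δ| / |Uₙ| ≤ |δ|`; since
`|Aₙ₊₁ - βₙ₊₁| = |Aₙ - βₙ| |Aₙ₊₁| |βₙ₊₁|` with `|Aₙ₊₁| > 1`, eventually `|βₙ| < 1`, and from then on
`deg Uₙ, deg Vₙ ≤ -order δ`. Over a finite field this leaves finitely many triples `(Uₙ, Vₙ, ±δ)`,
and they determine `Aₙ`, so two complete quotients coincide.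
-/

open Polynomial

/-- The ring homomorphism `K[X] → K((T))` sending `X` to `T⁻¹`. -/
noncomputable def iota {K : Type*} [Field K] : Polynomial K →+* LaurentSeries K :=
  Polynomial.eval₂RingHom (HahnSeries.C : K →+* LaurentSeries K)
    (HahnSeries.single (-1 : ℤ) (1 : K))

open Filter

section Iota

variable {K : Type*} [Field K]

theorem iota_C_mul_X_pow (c : K) (n : ℕ) :
    iota (C c * X ^ n) = HahnSeries.single (-(n : ℤ)) c := by
  simp [iota, HahnSeries.single_pow, HahnSeries.C, HahnSeries.single_mul_single]

theorem orderTop_iota {f : K[X]} (hf : f ≠ 0) :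
    (iota f).orderTop = ((-f.natDegree : ℤ) : WithTop ℤ) := by
  refine induction_with_natDegree_le
    (fun f : K[X] => f ≠ 0 → (iota f).orderTop = ((-f.natDegree : ℤ) : WithTop ℤ)) _
    (by simp)
    (fun n c hc _ _ => ?_) (fun f g hfg _ hf' hg' _ => ?_) f le_rfl hf
  · rw [iota_C_mul_X_pow, HahnSeries.orderTop_single hc, natDegree_C_mul_X_pow n c hc]
  · have hg : g ≠ 0 := by rintro rfl; simp at hfg
    rw [map_add, natDegree_add_eq_right_of_natDegree_lt hfg, HahnSeries.orderTop_add_eq_right,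
      hg' hg]
    rw [hg' hg]
    rcases eq_or_ne f 0 with rfl | hf0
    · simpa using WithTop.coe_lt_top (-(g.natDegree : ℤ))
    · rw [hf' hf0]
      exact_mod_cast neg_lt_neg (Nat.cast_lt.mpr hfg)

theorem iota_ne_zero {f : K[X]} (hf : f ≠ 0) : iota f ≠ 0 := by
  rw [← HahnSeries.orderTop_ne_top, orderTop_iota hf]
  exact WithTop.coe_ne_top

theorem order_iota {f : K[X]} (hf : f ≠ 0) : (iota f).order = -(f.natDegree : ℤ) := by
  have h := HahnSeries.order_eq_orderTop_of_ne_zero (iota_ne_zero hf)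
  rw [orderTop_iota hf] at h
  exact_mod_cast h

end Iota

namespace HahnSeries

variable {Γ R : Type*} [LinearOrder Γ] [Zero Γ] [AddGroup R] {x y : HahnSeries Γ R}

theorem order_add_eq_left (hx : x ≠ 0) (h : x.order < y.order) : (x + y).order = x.order := by
  rcases eq_or_ne y 0 with rfl | hy
  · rw [add_zero]
  have hlt : x.orderTop < y.orderTop := by
    rw [← order_eq_orderTop_of_ne_zero hx, ← order_eq_orderTop_of_ne_zero hy]
    exact_mod_cast h
  have hxy : x + y ≠ 0 := by
    rw [← orderTop_ne_top, orderTop_add_eq_left hlt]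
    exact orderTop_ne_top.mpr hx
  exact_mod_cast (order_eq_orderTop_of_ne_zero hxy).trans
    ((orderTop_add_eq_left hlt).trans (order_eq_orderTop_of_ne_zero hx).symm)

theorem order_sub_eq_left (hx : x ≠ 0) (h : x.order < y.order) : (x - y).order = x.order := by
  rw [sub_eq_add_neg, order_add_eq_left hx (by rwa [order_neg])]

end HahnSeries

theorem Polynomial.setOf_natDegree_le_finite {K : Type*} [Field K] [Finite K] (B : ℕ) :
    {p : K[X] | p.natDegree ≤ B}.Finite := by
  have : Finite (degreeLT K (B + 1)) :=
    Finite.of_equiv _ (degreeLTEquiv K (B + 1)).toEquiv.symm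
  refine (Set.toFinite (degreeLT K (B + 1) : Set K[X])).subset fun p hp => ?_
  rw [SetLike.mem_coe, mem_degreeLT]
  exact degree_le_natDegree.trans_lt (by exact_mod_cast Nat.lt_succ_of_le hp)

theorem exists_eq_add_of_eventually_mem_finite {α : Type*} {f : ℕ → α} {S : Set α}
    (hS : S.Finite) (hf : ∀ᶠ n in atTop, f n ∈ S) :
    ∃ n ℓ : ℕ, 1 ≤ ℓ ∧ f n = f (n + ℓ) := by
  obtain ⟨N, hN⟩ := eventually_atTop.mp hf
  obtain ⟨k, l, hkl, h⟩ :=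
    hS.exists_lt_map_eq_of_forall_mem (f := fun k => f (N + k)) fun k => hN _ (by omega)
  exact ⟨N + k, l - k, by omega, by rw [h]; congr 1; omega⟩

structure QuadCoeffs (R : Type*) where
  u : R
  v : R
  w : R

namespace QuadCoeffs

section CommRing

variable {R S : Type*} [CommRing R] [CommRing S] (q : QuadCoeffs R)

def eval (x : R) : R := q.u * x ^ 2 + q.v * x + q.w

def evalDeriv (x : R) : R := 2 * q.u * x + q.v

def discr : R := discrim q.u q.v q.w

def map (f : R →+* S) : QuadCoeffs S := ⟨f q.u, f q.v, f q.w⟩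

/-- `y² q(t + 1 / y)`, whose roots are the `1 / (x - t)` for the roots `x ≠ t` of `q`. -/
def shift (t : R) : QuadCoeffs R := ⟨q.eval t, q.evalDeriv t, q.u⟩

theorem discr_shift (t : R) : (q.shift t).discr = q.discr := by
  simp only [discr, shift, eval, evalDeriv, discrim]
  ring

theorem discr_map (f : R →+* S) : (q.map f).discr = f q.discr := by
  simp [discr, map, discrim, map_ofNat]

theorem map_shift (f : R →+* S) (t : R) : (q.shift t).map f = (q.map f).shift (f t) := by
  simp [shift, map, eval, evalDeriv, map_ofNat]

theorem map_eval (f : R →+* S) (x : R) : (q.map f).eval (f x) = f (q.eval x) := by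
  simp [map, eval]

theorem discr_eq_evalDeriv_sq {x : R} (hx : q.eval x = 0) : q.discr = q.evalDeriv x ^ 2 :=
  discrim_eq_sq_of_quadratic_eq_zero (by rw [← hx, eval, sq])

theorem eval_shift_eq_zero {x y t : R} (hx : q.eval x = 0) (hy : y * (x - t) = 1) :
    (q.shift t).eval y = 0 := by
  simp only [shift, eval, evalDeriv] at hx ⊢
  linear_combination y ^ 2 * hx - (q.u * (x * y + t * y + 1) + q.v * y) * hy

end CommRing

section Field

variable {F : Type*} [Field F] (q : QuadCoeffs F)

/-- The other root: the roots of `q` add up to `-q.v / q.u`. -/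
def conj (x : F) : F := -q.v / q.u - x

theorem sub_conj (hu : q.u ≠ 0) (x : F) : x - q.conj x = q.evalDeriv x / q.u := by
  simp only [conj, evalDeriv]
  field_simp
  ring

theorem add_conj (x : F) : x + q.conj x = -q.v / q.u := by
  simp only [conj]
  ring

theorem eq_evalDeriv_sub_div (h : 2 * q.u ≠ 0) (x : F) :
    x = (q.evalDeriv x - q.v) / (2 * q.u) := by
  rw [eq_div_iff h, evalDeriv]
  ring

theorem conj_shift_mul_sub_eq_one {x y t : F} (hu : q.u ≠ 0) (ht : q.eval t ≠ 0)
    (hx : q.eval x = 0) (hy : y * (x - t) = 1) : (q.shift t).conj y * (q.conj x - t) = 1 := by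
  generalize hQ : q.eval t = Q at ht
  simp only [conj, shift, evalDeriv, hQ]
  simp only [eval] at hx hQ
  field_simp
  linear_combination
    (y * (q.u * (t + x) + q.v) - q.u) * (hx - hQ) - (q.u * (t + x) + q.v) ^ 2 * hy

end Field

end QuadCoeffs

def cfForms {R : Type*} [CommRing R] (q : QuadCoeffs R) (a : ℕ → R) : ℕ → QuadCoeffs R
  | 0 => q
  | n + 1 => (cfForms q a n).shift (a n)

theorem discr_cfForms {R : Type*} [CommRing R] (q : QuadCoeffs R) (a : ℕ → R) (n : ℕ) :
    (cfForms q a n).discr = q.discr := by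
  induction n with
  | zero => rfl
  | succ n ih => rw [cfForms, QuadCoeffs.discr_shift, ih]

theorem eval_cfForms_eq_zero {R S : Type*} [CommRing R] [CommRing S] {q : QuadCoeffs R}
    {a : ℕ → R} {f : R →+* S} {A : ℕ → S} (hA : ∀ n, A (n + 1) * (A n - f (a n)) = 1)
    (h0 : (q.map f).eval (A 0) = 0) (n : ℕ) : ((cfForms q a n).map f).eval (A n) = 0 := by
  induction n with
  | zero => exact h0
  | succ n ih =>
    rw [cfForms, QuadCoeffs.map_shift]
    exact QuadCoeffs.eval_shift_eq_zero _ ih (hA n)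

section ContinuedFraction

variable {K : Type*} [Field K]

def IsCFDatum (A : ℕ → LaurentSeries K) (a : ℕ → K[X]) : Prop :=
  ∀ n, 0 < (A n - iota (a n)).orderTop ∧ A (n + 1) * (A n - iota (a n)) = 1

namespace IsCFDatum

variable {A : ℕ → LaurentSeries K} {a : ℕ → K[X]}

theorem sub_iota_ne_zero (hA : IsCFDatum A a) (n : ℕ) : A n - iota (a n) ≠ 0 :=
  right_ne_zero_of_mul_eq_one (hA n).2

theorem apply_succ_ne_zero (hA : IsCFDatum A a) (n : ℕ) : A (n + 1) ≠ 0 :=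
  left_ne_zero_of_mul_eq_one (hA n).2

theorem one_le_order_sub_iota (hA : IsCFDatum A a) (n : ℕ) : 1 ≤ (A n - iota (a n)).order :=
  (HahnSeries.zero_lt_orderTop_iff (hA.sub_iota_ne_zero n)).mp (hA n).1

theorem order_apply_succ_le (hA : IsCFDatum A a) (n : ℕ) : (A (n + 1)).order ≤ -1 := by
  have h := congrArg HahnSeries.order (hA n).2
  rw [HahnSeries.order_mul (hA.apply_succ_ne_zero n) (hA.sub_iota_ne_zero n),
    HahnSeries.order_one] at h
  linarith [hA.one_le_order_sub_iota n]

theorem order_iota_succ (hA : IsCFDatum A a) (n : ℕ) :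
    (iota (a (n + 1))).order = (A (n + 1)).order := by
  rw [← sub_sub_cancel (A (n + 1)) (iota (a (n + 1)))]
  exact HahnSeries.order_sub_eq_left (hA.apply_succ_ne_zero n)
    (by linarith [hA.order_apply_succ_le n, hA.one_le_order_sub_iota (n + 1)])

/-- The complete quotients are irrational: for a rational one the degrees of the denominators
would decrease forever, as in Euclid's algorithm. -/
theorem mul_iota_ne_iota (hA : IsCFDatum A a) (m : ℕ) (p : K[X]) {r : K[X]} (hr : r ≠ 0) :
    A m * iota r ≠ iota p := by
  induction hd : r.natDegree using Nat.strong_induction_on generalizing m p r with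
  | _ d ih =>
    intro h
    have hmul : (A m - iota (a m)) * iota r = iota (p - a m * r) := by
      rw [map_sub, map_mul]
      linear_combination h
    have hr' : p - a m * r ≠ 0 := by
      intro h0
      rw [h0, map_zero] at hmul
      exact mul_ne_zero (hA.sub_iota_ne_zero m) (iota_ne_zero hr) hmul
    have hdeg : (p - a m * r).natDegree < d := by
      have h := congrArg HahnSeries.order hmul
      rw [HahnSeries.order_mul (hA.sub_iota_ne_zero m) (iota_ne_zero hr), order_iota hr,
        order_iota hr'] at h
      linarith [hA.one_le_order_sub_iota m]
    exact ih _ hdeg (m + 1) r hr' rfl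
      (by linear_combination iota r * (hA m).2 - A (m + 1) * hmul)

/-- An order decreasing by at least one at each step would be unbounded below. -/
theorem exists_one_le_order_conj (hA : IsCFDatum A a) {β : ℕ → LaurentSeries K}
    (hβ : ∀ n, β (n + 1) * (β n - iota (a n)) = 1) (hne : ∀ n, A n ≠ β n) {c : ℤ}
    (hc : ∀ n, c ≤ (A n - β n).order) : ∃ N, 1 ≤ N ∧ 1 ≤ (β N).order := by
  by_contra! hβle
  have hstep (n : ℕ) : (A (n + 1) - β (n + 1)).order ≤ (A n - β n).order - 1 := by
    have hβ0 : β (n + 1) ≠ 0 := left_ne_zero_of_mul_eq_one (hβ n)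
    have hid : (A n - β n) * A (n + 1) * β (n + 1) = -(A (n + 1) - β (n + 1)) := by
      linear_combination β (n + 1) * (hA n).2 - A (n + 1) * hβ n
    have h := congrArg HahnSeries.order hid
    have hsub : A n - β n ≠ 0 := sub_ne_zero.mpr (hne n)
    rw [HahnSeries.order_mul (mul_ne_zero hsub (hA.apply_succ_ne_zero n)) hβ0,
      HahnSeries.order_mul hsub (hA.apply_succ_ne_zero n), HahnSeries.order_neg] at h
    linarith [hA.order_apply_succ_le n, hβle (n + 1) (by omega)]
  have hdecr (n : ℕ) : (A n - β n).order ≤ (A 0 - β 0).order - n := by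
    induction n with
    | zero => simp
    | succ n ih => push_cast; linarith [hstep n]
  have h := hdecr ((A 0 - β 0).order - c + 1).toNat
  linarith [hc ((A 0 - β 0).order - c + 1).toNat, Int.self_le_toNat ((A 0 - β 0).order - c + 1)]

theorem one_le_order_conj_succ (hA : IsCFDatum A a) {β : ℕ → LaurentSeries K}
    (hβ : ∀ n, β (n + 1) * (β n - iota (a n)) = 1) {n : ℕ} (hn : 1 ≤ n)
    (h : 1 ≤ (β n).order) : 1 ≤ (β (n + 1)).order := by
  obtain ⟨m, rfl⟩ := Nat.exists_eq_add_of_le' hn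
  have ha : (iota (a (m + 1))).order ≤ -1 := hA.order_iota_succ m ▸ hA.order_apply_succ_le m
  have ha0 : iota (a (m + 1)) ≠ 0 := by
    rintro h0
    rw [h0, HahnSeries.order_zero] at ha
    omega
  have hsub : (β (m + 1) - iota (a (m + 1))).order = (iota (a (m + 1))).order := by
    rw [← neg_sub, HahnSeries.order_neg, HahnSeries.order_sub_eq_left ha0 (by omega)]
  have h1 := congrArg HahnSeries.order (hβ (m + 1))
  rw [HahnSeries.order_mul (left_ne_zero_of_mul_eq_one (hβ (m + 1)))
    (right_ne_zero_of_mul_eq_one (hβ (m + 1))), HahnSeries.order_one, hsub] at h1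
  omega

theorem eventually_one_le_order_conj (hA : IsCFDatum A a) {β : ℕ → LaurentSeries K}
    (hβ : ∀ n, β (n + 1) * (β n - iota (a n)) = 1) (hne : ∀ n, A n ≠ β n) {c : ℤ}
    (hc : ∀ n, c ≤ (A n - β n).order) : ∀ᶠ n in atTop, 1 ≤ (β n).order := by
  obtain ⟨N, hN1, hN⟩ := hA.exists_one_le_order_conj hβ hne hc
  refine eventually_atTop.mpr ⟨N, fun n hn => ?_⟩
  induction n, hn using Nat.le_induction with
  | base => exact hN
  | succ n hn ih => exact hA.one_le_order_conj_succ hβ (hN1.trans hn) ih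

end IsCFDatum

end ContinuedFraction

section Quadratic

variable {K : Type*} [Field K]

namespace QuadCoeffs

variable {P : QuadCoeffs K[X]} {x : LaurentSeries K}

theorem u_ne_zero_of_evalDeriv_ne_iota (h : ∀ g : K[X], (P.map iota).evalDeriv x ≠ iota g) :
    P.u ≠ 0 := by
  intro hu
  exact h P.v (by simp [evalDeriv, map, hu])

theorem sub_conj_ne_zero (hu : P.u ≠ 0) (hd : (P.map iota).evalDeriv x ≠ 0) :
    x - (P.map iota).conj x ≠ 0 := by
  rw [sub_conj _ (iota_ne_zero hu)]
  exact div_ne_zero hd (iota_ne_zero hu)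

theorem order_sub_conj (hu : P.u ≠ 0) (hd : (P.map iota).evalDeriv x ≠ 0) :
    (x - (P.map iota).conj x).order = ((P.map iota).evalDeriv x).order + P.u.natDegree := by
  have h : (x - (P.map iota).conj x) * iota P.u = (P.map iota).evalDeriv x := by
    rw [sub_conj _ (iota_ne_zero hu)]
    exact div_mul_cancel₀ _ (iota_ne_zero hu)
  have h' := congrArg HahnSeries.order h
  rw [HahnSeries.order_mul (sub_conj_ne_zero hu hd) (iota_ne_zero hu), order_iota hu] at h'
  omega

/-- `x` is reduced: `|x| > 1 > |x'|` for `|y| = exp (-y.order)`. -/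
theorem natDegree_le_of_reduced (hu : P.u ≠ 0) (hd : (P.map iota).evalDeriv x ≠ 0)
    (hx : x.order ≤ -1) (hx' : 1 ≤ ((P.map iota).conj x).order) :
    (P.u.natDegree : ℤ) ≤ -1 - ((P.map iota).evalDeriv x).order ∧
      (P.v.natDegree : ℤ) ≤ -((P.map iota).evalDeriv x).order := by
  have hx0 : x ≠ 0 := by
    rintro rfl
    rw [HahnSeries.order_zero] at hx
    omega
  have hsub := order_sub_conj hu hd
  rw [HahnSeries.order_sub_eq_left hx0 (by omega)] at hsub
  refine ⟨by omega, ?_⟩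
  rcases eq_or_ne P.v 0 with hv | hv
  · rw [hv, natDegree_zero]
    omega
  have h : (x + (P.map iota).conj x) * iota P.u = -iota P.v := by
    rw [add_conj]
    exact div_mul_cancel₀ _ (iota_ne_zero hu)
  have hadd0 : x + (P.map iota).conj x ≠ 0 := by
    rintro h0
    rw [h0, zero_mul, eq_comm, neg_eq_zero] at h
    exact iota_ne_zero hv h
  have h' := congrArg HahnSeries.order h
  rw [HahnSeries.order_mul hadd0 (iota_ne_zero hu), HahnSeries.order_neg, order_iota hu,
    order_iota hv, HahnSeries.order_add_eq_left hx0 (by omega)] at h'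
  omega

end QuadCoeffs

variable {A : ℕ → LaurentSeries K} {a : ℕ → K[X]} {q : QuadCoeffs K[X]}

theorem evalDeriv_ne_iota (hA : IsCFDatum A a) (h2 : (2 : K[X]) ≠ 0) (hu : q.u ≠ 0) (g : K[X]) :
    (q.map iota).evalDeriv (A 0) ≠ iota g := by
  intro h
  refine hA.mul_iota_ne_iota 0 (g - q.v) (mul_ne_zero h2 hu) ?_
  simp only [QuadCoeffs.evalDeriv, QuadCoeffs.map] at h
  rw [map_sub, map_mul, map_ofNat]
  linear_combination h

theorem evalDeriv_cfForms_eq_or_neg (hA : IsCFDatum A a) (hroot : (q.map iota).eval (A 0) = 0)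
    (n : ℕ) :
    ((cfForms q a n).map iota).evalDeriv (A n) = (q.map iota).evalDeriv (A 0) ∨
      ((cfForms q a n).map iota).evalDeriv (A n) = -(q.map iota).evalDeriv (A 0) := by
  rw [← sq_eq_sq_iff_eq_or_eq_neg, ← QuadCoeffs.discr_eq_evalDeriv_sq _ hroot,
    ← QuadCoeffs.discr_eq_evalDeriv_sq _ (eval_cfForms_eq_zero (fun n => (hA n).2) hroot n),
    QuadCoeffs.discr_map, QuadCoeffs.discr_map, discr_cfForms]

theorem order_evalDeriv_cfForms (hA : IsCFDatum A a) (hroot : (q.map iota).eval (A 0) = 0)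
    (n : ℕ) :
    (((cfForms q a n).map iota).evalDeriv (A n)).order = ((q.map iota).evalDeriv (A 0)).order := by
  rcases evalDeriv_cfForms_eq_or_neg hA hroot n with h | h <;> rw [h]
  exact HahnSeries.order_neg

theorem evalDeriv_cfForms_ne_iota (hA : IsCFDatum A a) (hroot : (q.map iota).eval (A 0) = 0)
    (hδ : ∀ g : K[X], (q.map iota).evalDeriv (A 0) ≠ iota g) (n : ℕ) (g : K[X]) :
    ((cfForms q a n).map iota).evalDeriv (A n) ≠ iota g := by
  rcases evalDeriv_cfForms_eq_or_neg hA hroot n with h | h <;> rw [h]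
  · exact hδ g
  · exact fun h' => hδ (-g) (by rw [map_neg, ← h', neg_neg])

theorem conj_cfForms_succ_mul_sub_eq_one (hA : IsCFDatum A a)
    (hroot : (q.map iota).eval (A 0) = 0) (hu : ∀ n, (cfForms q a n).u ≠ 0) (n : ℕ) :
    ((cfForms q a (n + 1)).map iota).conj (A (n + 1)) *
      (((cfForms q a n).map iota).conj (A n) - iota (a n)) = 1 := by
  rw [cfForms, QuadCoeffs.map_shift]
  refine QuadCoeffs.conj_shift_mul_sub_eq_one _ (iota_ne_zero (hu n)) ?_
    (eval_cfForms_eq_zero (fun n => (hA n).2) hroot n) (hA n).2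
  rw [QuadCoeffs.map_eval]
  exact iota_ne_zero (hu (n + 1))

theorem eventually_natDegree_cfForms_le (hA : IsCFDatum A a)
    (hroot : (q.map iota).eval (A 0) = 0)
    (hδ : ∀ g : K[X], (q.map iota).evalDeriv (A 0) ≠ iota g) :
    ∃ B : ℕ, ∀ᶠ n in atTop,
      (cfForms q a n).u.natDegree ≤ B ∧ (cfForms q a n).v.natDegree ≤ B := by
  have hd := evalDeriv_cfForms_ne_iota hA hroot hδ
  have hu n := QuadCoeffs.u_ne_zero_of_evalDeriv_ne_iota (hd n)
  have hd0 n : ((cfForms q a n).map iota).evalDeriv (A n) ≠ 0 := by simpa using hd n 0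
  have hord := order_evalDeriv_cfForms hA hroot
  generalize ((q.map iota).evalDeriv (A 0)).order = c at hord
  have hred := hA.eventually_one_le_order_conj
    (β := fun n => ((cfForms q a n).map iota).conj (A n))
    (conj_cfForms_succ_mul_sub_eq_one hA hroot hu)
    (fun n => sub_ne_zero.mp (QuadCoeffs.sub_conj_ne_zero (hu n) (hd0 n))) (c := c)
    (fun n => by rw [QuadCoeffs.order_sub_conj (hu n) (hd0 n), hord n]; omega)
  refine ⟨(-c).toNat, ?_⟩
  filter_upwards [hred, eventually_ge_atTop 1] with n hβ hn
  obtain ⟨m, rfl⟩ := Nat.exists_eq_add_of_le' hn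
  obtain ⟨hU, hV⟩ :=
    QuadCoeffs.natDegree_le_of_reduced (hu _) (hd0 _) (hA.order_apply_succ_le m) hβ
  rw [hord] at hU hV
  have := Int.self_le_toNat (-c)
  omega

theorem exists_finite_eventually_mem [Finite K] (hA : IsCFDatum A a)
    (hroot : (q.map iota).eval (A 0) = 0) (h2 : (2 : K[X]) ≠ 0)
    (hδ : ∀ g : K[X], (q.map iota).evalDeriv (A 0) ≠ iota g) :
    ∃ S : Set (LaurentSeries K), S.Finite ∧ ∀ᶠ n in atTop, A n ∈ S := by
  obtain ⟨B, hB⟩ := eventually_natDegree_cfForms_le hA hroot hδ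
  have hs := evalDeriv_cfForms_eq_or_neg hA hroot
  have hu n := QuadCoeffs.u_ne_zero_of_evalDeriv_ne_iota (evalDeriv_cfForms_ne_iota hA hroot hδ n)
  generalize (q.map iota).evalDeriv (A 0) = δ at hs
  refine ⟨(fun p : K[X] × K[X] × LaurentSeries K => (p.2.2 - iota p.2.1) / (2 * iota p.1)) ''
    ({p | p.natDegree ≤ B} ×ˢ {p | p.natDegree ≤ B} ×ˢ {δ, -δ}),
    ((setOf_natDegree_le_finite B).prod ((setOf_natDegree_le_finite B).prod
      (Set.toFinite _))).image _, ?_⟩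
  filter_upwards [hB] with n hn
  have h2u : 2 * iota (cfForms q a n).u ≠ 0 := by
    rw [← map_ofNat iota 2, ← map_mul]
    exact iota_ne_zero (mul_ne_zero h2 (hu n))
  exact ⟨((cfForms q a n).u, (cfForms q a n).v, _), ⟨hn.1, hn.2, hs n⟩,
    (QuadCoeffs.eq_evalDeriv_sub_div ((cfForms q a n).map iota) h2u (A n)).symm⟩

end Quadratic

/-- Over a finite field of odd characteristic, the continued fraction of any Laurent series
that is quadratic over the rational function field is periodic. -/
theorem quadratic_cf_periodic_over_finite_field {K : Type*} [Field K] [Fintype K]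
    (h2 : (2 : K) ≠ 0)
    (α : LaurentSeries K)
    (A : ℕ → LaurentSeries K) (a : ℕ → Polynomial K)
    (h0 : A 0 = α)
    (hfrac : ∀ n, 0 < (A n - iota (a n)).orderTop ∧ A (n + 1) * (A n - iota (a n)) = 1)
    (u v w : Polynomial K) (hu : u ≠ 0)
    (hquad : iota u * α ^ 2 + iota v * α + iota w = 0) :
    ∃ n ℓ : ℕ, 1 ≤ ℓ ∧ A n = A (n + ℓ) := by
  let q : QuadCoeffs K[X] := ⟨u, v, w⟩
  have h2' : (2 : K[X]) ≠ 0 := by simpa [map_ofNat] using C_ne_zero.mpr h2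
  have hroot : (q.map iota).eval (A 0) = 0 := h0 ▸ hquad
  obtain ⟨S, hS, hAS⟩ :=
    exists_finite_eventually_mem hfrac hroot h2' (evalDeriv_ne_iota hfrac h2' (q := q) hu)
  exact exists_eq_add_of_eventually_mem_finite hS hAS
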